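/- Let 𝔤 = 𝔥 ⊕ 𝔪 be a reductive decomposition and let r : 𝔪* → 𝔪 be skew, 𝔥-equivariant, and satisfy r([α, β]_r) = p_𝔪([r α, r β]) for all α, β ∈ 𝔪*. Then: (i) r maps (𝔪*)^𝔥 into 𝔪^𝔥; (ii) for all α, β ∈ (𝔪*)^𝔥, [α, β]_r ∈ (𝔪*)^𝔥; (iii) the Jacobi identity holds: for all α, β, γ ∈ (𝔪*)^𝔥, [[α, β]_r, γ]_r + [[β, γ]_r, α]_r + [[γ, α]_r, β]_r = 0. Hence ((𝔪*)^𝔥, [·,·]_r) is a Lie algebra and α ↦ r α is a Lie algebra morphism into (𝔪^𝔥, [·,·]_𝔪). -/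

import Mathlib

/-- The projection `p_𝔪 : 𝔤 → 𝔪` along `𝔥`, for a decomposition `𝔤 = 𝔥 ⊕ 𝔪`. -/
noncomputable def pm {L : Type*} [LieRing L] [LieAlgebra ℝ L]
    (H : LieSubalgebra ℝ L) (m : Submodule ℝ L)
    (hc : IsCompl H.toSubmodule m) : L →ₗ[ℝ] m :=
  Submodule.linearProjOfIsCompl m H.toSubmodule hc.symm

/-- For `x ∈ 𝔤`, the map `𝔪 → 𝔪`, `v ↦ p_𝔪([x, v])`. -/
noncomputable def adm {L : Type*} [LieRing L] [LieAlgebra ℝ L]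
    (H : LieSubalgebra ℝ L) (m : Submodule ℝ L)
    (hc : IsCompl H.toSubmodule m) (x : L) : m →ₗ[ℝ] m :=
  pm H m hc ∘ₗ (LieAlgebra.ad ℝ L x) ∘ₗ m.subtype

/-- The bracket `[α, β]_r : u ↦ α([rβ, u]_𝔪) - β([rα, u]_𝔪)` on `𝔪*`. -/
noncomputable def bracketr {L : Type*} [LieRing L] [LieAlgebra ℝ L]
    (H : LieSubalgebra ℝ L) (m : Submodule ℝ L)
    (hc : IsCompl H.toSubmodule m) (r : Module.Dual ℝ m →ₗ[ℝ] m)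
    (α β : Module.Dual ℝ m) : Module.Dual ℝ m :=
  α ∘ₗ adm H m hc (r β : L) - β ∘ₗ adm H m hc (r α : L)

/-- `r : 𝔪* → 𝔪` is skew: `ξ(rη) = -η(rξ)`. -/
def rIsSkew {L : Type*} [LieRing L] [LieAlgebra ℝ L]
    (m : Submodule ℝ L) (r : Module.Dual ℝ m →ₗ[ℝ] m) : Prop :=
  ∀ η ξ : Module.Dual ℝ m, ξ (r η) = - η (r ξ)

/-- `r : 𝔪* → 𝔪` is `𝔥`-equivariant: `r(α ∘ (ad u)|_𝔪) = -[u, rα]` for `u ∈ 𝔥`. -/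
def rIsEquivariant {L : Type*} [LieRing L] [LieAlgebra ℝ L]
    (H : LieSubalgebra ℝ L) (m : Submodule ℝ L)
    (hc : IsCompl H.toSubmodule m) (r : Module.Dual ℝ m →ₗ[ℝ] m) : Prop :=
  ∀ u ∈ H, ∀ α : Module.Dual ℝ m,
    (r (α ∘ₗ adm H m hc u) : L) = -⁅u, (r α : L)⁆

/-- `r` satisfies the Yang–Baxter-type equation `r([α,β]_r) = p_𝔪([rα, rβ])`. -/
def rIsYB {L : Type*} [LieRing L] [LieAlgebra ℝ L]
    (H : LieSubalgebra ℝ L) (m : Submodule ℝ L)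
    (hc : IsCompl H.toSubmodule m) (r : Module.Dual ℝ m →ₗ[ℝ] m) : Prop :=
  ∀ α β : Module.Dual ℝ m,
    r (bracketr H m hc r α β) = pm H m hc ⁅(r α : L), (r β : L)⁆

/-- The invariants `(𝔪*)^𝔥 = {α : α([u,v]) = 0 for all u ∈ 𝔥, v ∈ 𝔪}`. -/
def inDualInv {L : Type*} [LieRing L] [LieAlgebra ℝ L]
    (H : LieSubalgebra ℝ L) (m : Submodule ℝ L)
    (hc : IsCompl H.toSubmodule m) (α : Module.Dual ℝ m) : Prop :=
  ∀ u ∈ H, ∀ v : m, α (adm H m hc u v) = 0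

/-- The invariants `𝔪^𝔥 = {w ∈ 𝔪 : [u,w] = 0 for all u ∈ 𝔥}`. -/
def inMInv {L : Type*} [LieRing L] [LieAlgebra ℝ L]
    (H : LieSubalgebra ℝ L) (m : Submodule ℝ L) (w : m) : Prop :=
  ∀ u ∈ H, ⁅u, (w : L)⁆ = 0

/-! Equivariance makes `r` send invariant functionals to elements of `𝔪` commuting with `𝔥`,
which is (i). For such an `x`, `ad x` preserves `𝔥`, so `p_𝔪` intertwines `ad x` with
`[x, ·]_𝔪`. Hence `[x, ·]_𝔪` commutes with `[u, ·]_𝔪` for `u ∈ 𝔥`, giving (ii), and the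
Yang–Baxter equation turns (iii) into the Jacobi identity of `𝔤`, up to `𝔥`-components that
invariant functionals annihilate. -/

section Reductive

variable {L : Type*} [LieRing L] [LieAlgebra ℝ L] {H : LieSubalgebra ℝ L} {m : Submodule ℝ L}
  (hc : IsCompl H.toSubmodule m)

lemma pm_apply_of_mem {x : L} (hx : x ∈ m) : pm H m hc x = ⟨x, hx⟩ :=
  Submodule.projectionOnto_apply_left hc.symm ⟨x, hx⟩

lemma sub_pm_mem (x : L) : x - (pm H m hc x : L) ∈ H := by
  refine (Submodule.projectionOnto_apply_eq_zero_iff hc.symm).1 ?_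
  change pm H m hc (x - (pm H m hc x : L)) = 0
  rw [map_sub, pm_apply_of_mem hc (pm H m hc x).2, sub_self]

lemma adm_apply (x : L) (v : m) : adm H m hc x v = pm H m hc ⁅x, (v : L)⁆ :=
  rfl

lemma adm_sub (x y : L) (v : m) :
    adm H m hc (x - y) v = adm H m hc x v - adm H m hc y v := by
  simp only [adm, LinearMap.comp_apply, map_sub, LinearMap.sub_apply]

lemma pm_lie_eq_adm_pm {x : L} (hx : ∀ h ∈ H, ⁅x, h⁆ ∈ H) (z : L) :
    pm H m hc ⁅x, z⁆ = adm H m hc x (pm H m hc z) := by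
  have hH : pm H m hc ⁅x, z - (pm H m hc z : L)⁆ = 0 :=
    Submodule.projectionOnto_apply_of_mem_right hc.symm (hx _ (sub_pm_mem hc z))
  rwa [lie_sub, map_sub, sub_eq_zero] at hH

lemma lie_mem_of_inMInv {x : m} (hx : inMInv H m x) : ∀ h ∈ H, ⁅(x : L), h⁆ ∈ H := by
  intro h hh
  rw [← lie_skew, hx h hh, neg_zero]
  exact H.zero_mem

lemma inDualInv.comp_adm {α : Module.Dual ℝ m} (hα : inDualInv H m hc α) {u : L} (hu : u ∈ H) :
    α ∘ₗ adm H m hc u = 0 :=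
  LinearMap.ext (hα u hu)

lemma adm_comm_of_inMInv {x : m} (hx : inMInv H m x) {u : L} (hu : u ∈ H) (v : m) :
    adm H m hc x (adm H m hc u v) = adm H m hc u (adm H m hc x v) := by
  have hxu : ⁅(x : L), ⁅u, (v : L)⁆⁆ = ⁅u, ⁅(x : L), (v : L)⁆⁆ := by
    rw [← sub_eq_zero, ← lie_lie, ← lie_skew (x : L) u, hx u hu, neg_zero, zero_lie]
  calc adm H m hc x (adm H m hc u v) = pm H m hc ⁅(x : L), ⁅u, (v : L)⁆⁆ :=
        (pm_lie_eq_adm_pm hc (lie_mem_of_inMInv hx) _).symm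
    _ = pm H m hc ⁅u, ⁅(x : L), (v : L)⁆⁆ := by rw [hxu]
    _ = adm H m hc u (adm H m hc x v) := pm_lie_eq_adm_pm hc (fun _ => H.lie_mem hu) _

/-- The `𝔥`-component of `[x, y]` is invisible to an invariant functional. -/
lemma inDualInv.apply_adm_pm_lie {γ : Module.Dual ℝ m} (hγ : inDualInv H m hc γ) {x y : m}
    (hx : inMInv H m x) (hy : inMInv H m y) (u : m) :
    γ (adm H m hc (pm H m hc ⁅(x : L), (y : L)⁆) u) =
      γ (adm H m hc x (adm H m hc y u)) - γ (adm H m hc y (adm H m hc x u)) := by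
  have hcomm : adm H m hc x (adm H m hc y u) - adm H m hc y (adm H m hc x u) =
      adm H m hc ⁅(x : L), (y : L)⁆ u := by
    rw [adm_apply hc y, adm_apply hc x u, ← pm_lie_eq_adm_pm hc (lie_mem_of_inMInv hx),
      ← pm_lie_eq_adm_pm hc (lie_mem_of_inMInv hy), ← map_sub, ← lie_lie, adm_apply]
  have hH := hγ _ (sub_pm_mem hc ⁅(x : L), (y : L)⁆) u
  rw [adm_sub, map_sub, sub_eq_zero] at hH
  rw [← map_sub, hcomm, hH]

end Reductive

section Invariants

variable {L : Type*} [LieRing L] [LieAlgebra ℝ L] {H : LieSubalgebra ℝ L} {m : Submodule ℝ L}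
  {hc : IsCompl H.toSubmodule m} {r : Module.Dual ℝ m →ₗ[ℝ] m}

lemma bracketr_apply (α β : Module.Dual ℝ m) (u : m) :
    bracketr H m hc r α β u = α (adm H m hc (r β) u) - β (adm H m hc (r α) u) :=
  rfl

lemma inMInv_of_inDualInv (hequiv : rIsEquivariant H m hc r) {α : Module.Dual ℝ m}
    (hα : inDualInv H m hc α) : inMInv H m (r α) := by
  intro u hu
  have h := hequiv u hu α
  rwa [hα.comp_adm hc hu, map_zero, Submodule.coe_zero, eq_comm, neg_eq_zero] at h

lemma inDualInv_bracketr (hequiv : rIsEquivariant H m hc r) {α β : Module.Dual ℝ m}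
    (hα : inDualInv H m hc α) (hβ : inDualInv H m hc β) :
    inDualInv H m hc (bracketr H m hc r α β) := by
  intro u hu v
  simp only [bracketr, LinearMap.sub_apply, LinearMap.comp_apply,
    adm_comm_of_inMInv hc (inMInv_of_inDualInv hequiv hα) hu,
    adm_comm_of_inMInv hc (inMInv_of_inDualInv hequiv hβ) hu, hα u hu, hβ u hu, sub_zero]

lemma bracketr_jacobi (hequiv : rIsEquivariant H m hc r) (hyb : rIsYB H m hc r)
    {α β γ : Module.Dual ℝ m} (hα : inDualInv H m hc α) (hβ : inDualInv H m hc β)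
    (hγ : inDualInv H m hc γ) :
    bracketr H m hc r (bracketr H m hc r α β) γ
      + bracketr H m hc r (bracketr H m hc r β γ) α
      + bracketr H m hc r (bracketr H m hc r γ α) β = 0 := by
  have hrα := inMInv_of_inDualInv hequiv hα
  have hrβ := inMInv_of_inDualInv hequiv hβ
  have hrγ := inMInv_of_inDualInv hequiv hγ
  ext u
  have kγ := hγ.apply_adm_pm_lie hc hrα hrβ u
  have kα := hα.apply_adm_pm_lie hc hrβ hrγ u
  have kβ := hβ.apply_adm_pm_lie hc hrγ hrα u
  simp only [LinearMap.add_apply, bracketr_apply, LinearMap.zero_apply]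
  rw [hyb α β, hyb β γ, hyb γ α]
  linarith

end Invariants

theorem invariants_lie_algebra_morphism_general {L : Type*} [LieRing L] [LieAlgebra ℝ L]
    (H : LieSubalgebra ℝ L) (m : Submodule ℝ L)
    (hc : IsCompl H.toSubmodule m)
    (r : Module.Dual ℝ m →ₗ[ℝ] m)
    (hequiv : rIsEquivariant H m hc r)
    (hyb : rIsYB H m hc r) :
    (∀ α : Module.Dual ℝ m, inDualInv H m hc α → inMInv H m (r α)) ∧
    (∀ α β : Module.Dual ℝ m, inDualInv H m hc α → inDualInv H m hc β →
      inDualInv H m hc (bracketr H m hc r α β)) ∧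
    (∀ α β γ : Module.Dual ℝ m,
      inDualInv H m hc α → inDualInv H m hc β → inDualInv H m hc γ →
      bracketr H m hc r (bracketr H m hc r α β) γ
        + bracketr H m hc r (bracketr H m hc r β γ) α
        + bracketr H m hc r (bracketr H m hc r γ α) β = 0) :=
  ⟨fun _ hα => inMInv_of_inDualInv hequiv hα,
    fun _ _ hα hβ => inDualInv_bracketr hequiv hα hβ,
    fun _ _ _ hα hβ hγ => bracketr_jacobi hequiv hyb hα hβ hγ⟩

/-- for a skew, `𝔥`-equivariant solution `r` of the Yang–Baxter-type
equation, `r` maps `(𝔪*)^𝔥` to `𝔪^𝔥`, the bracket `[·,·]_r` preserves `(𝔪*)^𝔥`,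
and it satisfies the Jacobi identity there. -/
theorem invariants_lie_algebra_morphism {L : Type*} [LieRing L] [LieAlgebra ℝ L]
    [FiniteDimensional ℝ L]
    (H : LieSubalgebra ℝ L) (m : Submodule ℝ L)
    (hc : IsCompl H.toSubmodule m)
    (hred : ∀ u ∈ H, ∀ v ∈ m, ⁅u, v⁆ ∈ m)
    (r : Module.Dual ℝ m →ₗ[ℝ] m)
    (hskew : rIsSkew m r) (hequiv : rIsEquivariant H m hc r)
    (hyb : rIsYB H m hc r) :
    (∀ α : Module.Dual ℝ m, inDualInv H m hc α → inMInv H m (r α)) ∧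
    (∀ α β : Module.Dual ℝ m, inDualInv H m hc α → inDualInv H m hc β →
      inDualInv H m hc (bracketr H m hc r α β)) ∧
    (∀ α β γ : Module.Dual ℝ m,
      inDualInv H m hc α → inDualInv H m hc β → inDualInv H m hc γ →
      bracketr H m hc r (bracketr H m hc r α β) γ
        + bracketr H m hc r (bracketr H m hc r β γ) α
        + bracketr H m hc r (bracketr H m hc r γ α) β = 0) :=
  invariants_lie_algebra_morphism_general H m hc r hequiv hyb
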